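/- Proposition 1, case (B2): suppose in the estimating-function setup that ω̃ = ω^{π_old} and d̃(·|a,s) = d^{π_old}(·|a,s) for all (a,s), Ṽ : S → ℝ is arbitrary, and Ã : A × S → ℝ satisfies Σ_{a∈A} π_old(a|s) Ã(a,s) = 0 for all s ∈ S. Then E[ψ(O)] = η₁(π, π_old). -/
import Mathlib

set_option linter.unusedSectionVars false
set_option maxHeartbeats 1600000


namespace VEPO

variable {S A : Type} [Fintype S] [Fintype A] [DecidableEq S] [DecidableEq A]

/-- A probability mass function on a finite type, represented as a real-valued function. -/
def IsPMF {X : Type} [Fintype X] (f : X → ℝ) : Prop :=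
  (∀ x, 0 ≤ f x) ∧ ∑ x : X, f x = 1

/-- A transition kernel: for each action-state pair `(a, s)`, a pmf `p a s` on next states. -/
def IsKernel (p : A → S → S → ℝ) : Prop := ∀ a s, IsPMF (p a s)

/-- A policy: for each state `s`, a pmf `π s` on actions. -/
def IsPolicy (π : S → A → ℝ) : Prop := ∀ s, IsPMF (π s)

/-- The `t`-step visitation probability `p_t^π(s' | a, s)`. -/
def visit (p : A → S → S → ℝ) (π : S → A → ℝ) : ℕ → A → S → S → ℝ
  | 0, _, s, s' => if s' = s then 1 else 0
  | 1, a, s, s' => p a s s'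
  | (t + 2), a, s, s' =>
      ∑ s'' : S, visit p π (t + 1) a s s'' * ∑ a'' : A, π s'' a'' * p a'' s'' s'

/-- The Q-function `Q^π(a, s)`. -/
noncomputable def Qfun (p : A → S → S → ℝ) (r : S → A → ℝ) (γ : ℝ)
    (π : S → A → ℝ) (a : A) (s : S) : ℝ :=
  r s a + ∑' t : ℕ, γ ^ (t + 1) *
    ∑ s' : S, visit p π (t + 1) a s s' * ∑ a' : A, π s' a' * r s' a'

/-- The value function `V^π(s)`. -/
noncomputable def Vfun (p : A → S → S → ℝ) (r : S → A → ℝ) (γ : ℝ)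
    (π : S → A → ℝ) (s : S) : ℝ :=
  ∑ a : A, π s a * Qfun p r γ π a s

/-- The advantage function `A^π(a, s)`. -/
noncomputable def Adv (p : A → S → S → ℝ) (r : S → A → ℝ) (γ : ℝ)
    (π : S → A → ℝ) (a : A) (s : S) : ℝ :=
  Qfun p r γ π a s - Vfun p r γ π s

/-- The conditional discounted visitation probability `d^π(s' | a, s)`. -/
noncomputable def dvisit (p : A → S → S → ℝ) (γ : ℝ) (π : S → A → ℝ)
    (s' : S) (a : A) (s : S) : ℝ :=
  (1 - γ) * ∑' t : ℕ, γ ^ t * visit p π t a s s'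

/-- The integrated discounted visitation probability `d^{π,ν}(s')`. -/
noncomputable def dnu (p : A → S → S → ℝ) (γ : ℝ) (ν : S → ℝ)
    (π : S → A → ℝ) (s' : S) : ℝ :=
  ∑ s : S, ∑ a : A, π s a * ν s * dvisit p γ π s' a s

/-- The integrated value `V(π) = Σ_s ν(s) V^π(s)`. -/
noncomputable def IntV (p : A → S → S → ℝ) (r : S → A → ℝ) (γ : ℝ) (ν : S → ℝ)
    (π : S → A → ℝ) : ℝ :=
  ∑ s : S, ν s * Vfun p r γ π s

/-- The first-order term `η₁(π₁, π₂)`. -/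
noncomputable def eta1 (p : A → S → S → ℝ) (r : S → A → ℝ) (γ : ℝ) (ν : S → ℝ)
    (π₁ π₂ : S → A → ℝ) : ℝ :=
  ∑ a : A, ∑ s : S, π₁ s a * Adv p r γ π₂ a s * dnu p γ ν π₂ s

/-- The higher-order remainder `η₂(π₁, π₂)`. -/
noncomputable def eta2 (p : A → S → S → ℝ) (r : S → A → ℝ) (γ : ℝ) (ν : S → ℝ)
    (π₁ π₂ : S → A → ℝ) : ℝ :=
  ∑ a : A, ∑ s : S, (π₁ s a - π₂ s a) * Adv p r γ π₂ a s *
    (dnu p γ ν π₁ s - dnu p γ ν π₂ s)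

/-- Total variation distance between two pmfs on a finite type. -/
noncomputable def DTV {X : Type} [Fintype X] (μ₁ μ₂ : X → ℝ) : ℝ :=
  (1 / 2) * ∑ x : X, |μ₁ x - μ₂ x|

/-- Kullback–Leibler divergence between two pmfs on a finite type, valued in `EReal`
(equal to `⊤` if `μ₁` is not absolutely continuous w.r.t. `μ₂`). -/
noncomputable def DKL {X : Type} [Fintype X] (μ₁ μ₂ : X → ℝ) : EReal :=
  ∑ x : X, (if μ₁ x = 0 then (0 : EReal)
    else if μ₂ x = 0 then (⊤ : EReal)
    else ((μ₁ x * Real.log (μ₁ x / μ₂ x) : ℝ) : EReal))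

/-- Conditional discounted stationary probability ratio `ω^π(a', s'; a, s)`. -/
noncomputable def ratio (p : A → S → S → ℝ) (γ : ℝ) (pinf : A → S → ℝ)
    (π : S → A → ℝ) (a' : A) (s' : S) (a : A) (s : S) : ℝ :=
  (1 - γ) * ((if a' = a ∧ s' = s then 1 else 0) +
    ∑' t : ℕ, γ ^ (t + 1) * (π s' a' * visit p π (t + 1) a s s')) / pinf a' s'

/-- Integrated discounted stationary probability ratio `ω^{π,ν}(a', s')`. -/
noncomputable def rationu (p : A → S → S → ℝ) (γ : ℝ) (pinf : A → S → ℝ) (ν : S → ℝ)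
    (π : S → A → ℝ) (a' : A) (s' : S) : ℝ :=
  ∑ a : A, ∑ s : S, π s a * ν s * ratio p γ pinf π a' s' a s

/-- Marginal state distribution `p̄_t^{π,ν}` at time `t` when `S₀ ~ ν` and actions follow `π`. -/
def marg (p : A → S → S → ℝ) (π : S → A → ℝ) (ν : S → ℝ) : ℕ → S → ℝ
  | 0, s' => ν s'
  | (t + 1), s' => ∑ s : S, marg p π ν t s * ∑ a : A, π s a * p a s s'

/-- Conditional discounted state–action visitation `q^π(a', s'; a, s)`. -/
noncomputable def qvisit (p : A → S → S → ℝ) (γ : ℝ) (π : S → A → ℝ)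
    (a' : A) (s' : S) (a : A) (s : S) : ℝ :=
  (1 - γ) * ((if a' = a ∧ s' = s then 1 else 0) +
    ∑' t : ℕ, γ ^ (t + 1) * (π s' a' * visit p π (t + 1) a s s'))

/-- The estimating function `ψ(o) = ψ₁ + ψ₂(o) + ψ₃(o)` evaluated at a data tuple
`o = (s, a, rr, s')`, for nuisance functions `Ṽ = Vt`, `Ã = At`, `ω̃ = ωt`
(with `ωt a' s' a s = ω̃(a',s'; a,s)`) and `d̃ = dt` (with `dt s* a s = d̃(s* | a, s)`). -/
noncomputable def psi (γ : ℝ) (ν : S → ℝ) (π πold : S → A → ℝ)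
    (Vt : S → ℝ) (At : A → S → ℝ) (ωt : A → S → A → S → ℝ) (dt : S → A → S → ℝ)
    (s : S) (a : A) (rr : ℝ) (s' : S) : ℝ :=
  let dtnu : S → ℝ := fun sstar => ∑ a0 : A, ∑ s0 : S, πold s0 a0 * ν s0 * dt sstar a0 s0
  let ωtnu : A → S → ℝ := fun a1 s1 => ∑ a0 : A, ∑ s0 : S, πold s0 a0 * ν s0 * ωt a1 s1 a0 s0
  (∑ sstar : S, dtnu sstar * ∑ astar : A, π sstar astar * At astar sstar)
  + (1 / (1 - γ)) * ∑ sstar : S, dtnu sstar * ∑ astar : A,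
      (π sstar astar - πold sstar astar) * ωt a s astar sstar *
        (rr + γ * Vt s' - Vt s - At a s)
  + (ωtnu a s / (1 - γ)) * ∑ astar : A,
      (γ * ∑ a' : A, πold s' a' * ∑ sstar : S, dt sstar a' s' * π sstar astar * At astar sstar
       - ∑ sstar : S, dt sstar a s * π sstar astar * At astar sstar
       + (1 - γ) * π s astar * At astar s)

/-- The expectation `E[ψ(O)]` of the estimating function, where `(A₀, S₀) ~ p_∞`,
`S₁ | (A₀, S₀) ~ p(· | A₀, S₀)` and `E[R₀ | A₀, S₀] = r(S₀, A₀)`;  since `ψ` is affine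
in its reward argument with a coefficient not depending on `s'`, this finite sum is
exactly the expectation of `ψ(O)`. -/
noncomputable def Epsi (p : A → S → S → ℝ) (r : S → A → ℝ) (γ : ℝ) (ν : S → ℝ)
    (pinf : A → S → ℝ) (π πold : S → A → ℝ)
    (Vt : S → ℝ) (At : A → S → ℝ) (ωt : A → S → A → S → ℝ) (dt : S → A → S → ℝ) : ℝ :=
  ∑ a : A, ∑ s : S, pinf a s * ∑ s' : S, p a s s' *
    psi γ ν π πold Vt At ωt dt s a (r s a) s'

section Aux

variable {p : A → S → S → ℝ} {π : S → A → ℝ} {γ : ℝ}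

lemma visit_nonneg (hp : IsKernel p) (hπ : IsPolicy π) :
    ∀ t a s s', 0 ≤ visit p π t a s s'
  | 0, _, s, s' => by simp only [visit]; positivity
  | 1, a, s, s' => (hp a s).1 s'
  | (t + 2), a, s, s' => by
      simp only [visit]
      refine Finset.sum_nonneg fun s'' _ => mul_nonneg (visit_nonneg hp hπ (t+1) a s s'')
        (Finset.sum_nonneg fun a'' _ => mul_nonneg ((hπ s'').1 a'') ((hp a'' s'').1 s'))

lemma visit_sum_one (hp : IsKernel p) (hπ : IsPolicy π) :
    ∀ t a s, ∑ s' : S, visit p π t a s s' = 1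
  | 0, _, s => by simp [visit]
  | 1, a, s => (hp a s).2
  | (t + 2), a, s => by
      simp only [visit]
      rw [Finset.sum_comm]
      have : ∀ s'' : S, ∑ s' : S, visit p π (t+1) a s s'' * ∑ a'' : A, π s'' a'' * p a'' s'' s'
          = visit p π (t+1) a s s'' := by
        intro s''
        rw [← Finset.mul_sum, Finset.sum_comm]
        have : ∀ a'' : A, ∑ s' : S, π s'' a'' * p a'' s'' s' = π s'' a'' := by
          intro a''; rw [← Finset.mul_sum, (hp a'' s'').2, mul_one]
        rw [Finset.sum_congr rfl fun a'' _ => this a'', (hπ s'').2, mul_one]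
      rw [Finset.sum_congr rfl fun s'' _ => this s'', visit_sum_one hp hπ (t+1) a s]

lemma visit_le_one (hp : IsKernel p) (hπ : IsPolicy π) (t : ℕ) (a : A) (s s' : S) :
    visit p π t a s s' ≤ 1 := by
  calc visit p π t a s s' ≤ ∑ s'' : S, visit p π t a s s'' :=
        Finset.single_le_sum (fun x _ => visit_nonneg hp hπ t a s x) (Finset.mem_univ s')
    _ = 1 := visit_sum_one hp hπ t a s

lemma summable_bdd (hγ0 : 0 ≤ γ) (hγ1 : γ < 1) {f : ℕ → ℝ} {C : ℝ}
    (hf : ∀ t, |f t| ≤ C * γ ^ t) : Summable f := by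
  refine Summable.of_norm (Summable.of_nonneg_of_le (fun t => norm_nonneg _) (fun t => hf t) ?_)
  exact (summable_geometric_of_lt_one hγ0 hγ1).mul_left C

lemma visit_succ (hp : IsKernel p) (hπ : IsPolicy π) :
    ∀ (t : ℕ) (a : A) (s sstar : S), visit p π (t+1) a s sstar
      = ∑ s' : S, p a s s' * ∑ a' : A, π s' a' * visit p π t a' s' sstar := by
  intro t
  induction t with
  | zero =>
    intro a s sstar
    simp only [visit]
    have : ∀ s' : S, p a s s' * ∑ a' : A, π s' a' * (if sstar = s' then 1 else 0)
        = if s' = sstar then p a s s' else 0 := by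
      intro s'
      by_cases h : sstar = s'
      · subst h; simp [(hπ sstar).2]
      · simp [h, Ne.symm h]
    rw [Finset.sum_congr rfl fun s' _ => this s', Finset.sum_ite_eq']
    simp
  | succ n ih =>
    intro a s sstar
    rcases n with _ | m
    · simp only [visit]
    · show visit p π (m+3) a s sstar = _
      have hdef : visit p π (m+3) a s sstar
          = ∑ s'' : S, visit p π (m+2) a s s'' * ∑ a'' : A, π s'' a'' * p a'' s'' sstar := rfl
      rw [hdef]
      have : ∀ s'' : S, visit p π (m+2) a s s'' * ∑ a'' : A, π s'' a'' * p a'' s'' sstar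
          = ∑ s' : S, ∑ a' : A, p a s s' * (π s' a' * (visit p π (m+1) a' s' s''
              * ∑ a'' : A, π s'' a'' * p a'' s'' sstar)) := by
        intro s''
        rw [ih a s s'', Finset.sum_mul]
        refine Finset.sum_congr rfl fun s' _ => ?_
        rw [mul_assoc, Finset.sum_mul, Finset.mul_sum]
        exact Finset.sum_congr rfl fun a' _ => by ring
      rw [Finset.sum_congr rfl fun s'' _ => this s'', Finset.sum_comm]
      refine Finset.sum_congr rfl fun s' _ => ?_
      rw [Finset.mul_sum, Finset.sum_comm]
      refine Finset.sum_congr rfl fun a' _ => ?_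
      have hv : visit p π (m+1+1) a' s' sstar = ∑ x : S,
          visit p π (m+1) a' s' x * ∑ a'' : A, π x a'' * p a'' x sstar := rfl
      rw [hv]
      simp only [Finset.mul_sum]

lemma abs_visit_le (hp : IsKernel p) (hπ : IsPolicy π) (t : ℕ) (a : A) (s s' : S) :
    |visit p π t a s s'| ≤ 1 := by
  rw [abs_of_nonneg (visit_nonneg hp hπ t a s s')]; exact visit_le_one hp hπ t a s s'

lemma summable_visit (hp : IsKernel p) (hπ : IsPolicy π) (hγ0 : 0 ≤ γ) (hγ1 : γ < 1)
    (a : A) (s s' : S) : Summable (fun t => γ ^ t * visit p π t a s s') := by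
  refine summable_bdd hγ0 hγ1 (C := 1) fun t => ?_
  rw [abs_mul, abs_pow, abs_of_nonneg hγ0, one_mul]
  exact mul_le_of_le_one_right (pow_nonneg hγ0 t) (abs_visit_le hp hπ t a s s')

lemma dvisit_bellman (hp : IsKernel p) (hπ : IsPolicy π) (hγ0 : 0 ≤ γ) (hγ1 : γ < 1)
    (sstar : S) (a : A) (s : S) :
    dvisit p γ π sstar a s = (1 - γ) * (if sstar = s then 1 else 0)
      + γ * ∑ s' : S, p a s s' * ∑ a' : A, π s' a' * dvisit p γ π sstar a' s' := by
  have hsum : ∀ a s, Summable (fun t => γ ^ t * visit p π t a s sstar) :=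
    fun a s => summable_visit hp hπ hγ0 hγ1 a s sstar
  have h1 : ∀ t : ℕ, γ ^ (t+1) * visit p π (t+1) a s sstar
      = ∑ s' : S, ∑ a' : A, (γ * (p a s s' * π s' a'))
          * (γ ^ t * visit p π t a' s' sstar) := by
    intro t
    rw [visit_succ hp hπ t a s sstar]
    simp only [Finset.mul_sum]
    refine Finset.sum_congr rfl fun s' _ => Finset.sum_congr rfl fun a' _ => by ring
  have hγne : (1 : ℝ) - γ ≠ 0 := by linarith
  have h2 : ∑' t : ℕ, γ ^ (t+1) * visit p π (t+1) a s sstar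
      = ∑ s' : S, ∑ a' : A, (γ * (p a s s' * π s' a'))
          * ((1 - γ)⁻¹ * dvisit p γ π sstar a' s') := by
    rw [tsum_congr h1, Summable.tsum_finsetSum (fun s' _ => ?_)]
    · refine Finset.sum_congr rfl fun s' _ => ?_
      rw [Summable.tsum_finsetSum (fun a' _ => ((hsum a' s').mul_left _))]
      refine Finset.sum_congr rfl fun a' _ => ?_
      rw [tsum_mul_left, dvisit, inv_mul_cancel_left₀ hγne]
    · exact summable_sum fun a' _ => (hsum a' s').mul_left _
  rw [dvisit, Summable.tsum_eq_zero_add (hsum a s), h2]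
  have : (γ ^ 0 * visit p π 0 a s sstar) = (if sstar = s then 1 else 0) := by
    simp [visit]
  rw [this, mul_add]
  congr 1
  simp only [Finset.mul_sum]
  refine Finset.sum_congr rfl fun s' _ => Finset.sum_congr rfl fun a' _ => ?_
  field_simp

lemma summable_shift (hp : IsKernel p) (hπ : IsPolicy π) (hγ0 : 0 ≤ γ) (hγ1 : γ < 1)
    (a : A) (s : S) (astar : A) (sstar : S) :
    Summable (fun t => γ ^ (t+1) * (π s a * visit p π (t+1) astar sstar s)) := by
  refine summable_bdd hγ0 hγ1 (C := 1) fun t => ?_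
  have h1 : |π s a| ≤ 1 := by
    rw [abs_of_nonneg ((hπ s).1 a)]
    calc π s a ≤ ∑ a' : A, π s a' :=
          Finset.single_le_sum (fun x _ => (hπ s).1 x) (Finset.mem_univ a)
      _ = 1 := (hπ s).2
  have h2 : |π s a * visit p π (t+1) astar sstar s| ≤ 1 := by
    rw [abs_mul]
    exact mul_le_one₀ h1 (abs_nonneg _) (abs_visit_le hp hπ (t+1) astar sstar s)
  have h3 : |γ ^ (t+1)| ≤ γ ^ t := by
    rw [abs_pow, abs_of_nonneg hγ0, pow_succ]
    exact mul_le_of_le_one_right (pow_nonneg hγ0 t) (le_of_lt hγ1)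
  calc |γ ^ (t+1) * (π s a * visit p π (t+1) astar sstar s)|
      = |γ ^ (t+1)| * |π s a * visit p π (t+1) astar sstar s| := abs_mul _ _
    _ ≤ γ ^ t * 1 := mul_le_mul h3 h2 (abs_nonneg _) (pow_nonneg hγ0 t)
    _ = 1 * γ ^ t := by ring

lemma qsum (hp : IsKernel p) (hπ : IsPolicy π) (hγ0 : 0 ≤ γ) (hγ1 : γ < 1)
    (φ : A → S → ℝ) (astar : A) (sstar : S) :
    ∑ a : A, ∑ s : S, qvisit p γ π a s astar sstar * φ a s
    = (1 - γ) * (φ astar sstar + ∑' t : ℕ, γ ^ (t+1) *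
        ∑ s : S, visit p π (t+1) astar sstar s * ∑ a : A, π s a * φ a s) := by
  have hS : ∀ (a : A) (s : S), Summable
      (fun t => (1 - γ) * φ a s * (γ ^ (t+1) * (π s a * visit p π (t+1) astar sstar s))) :=
    fun a s => (summable_shift hp hπ hγ0 hγ1 a s astar sstar).mul_left _
  have key : ∀ (a : A) (s : S), qvisit p γ π a s astar sstar * φ a s
      = (1 - γ) * ((if a = astar ∧ s = sstar then 1 else 0) * φ a s)
        + ∑' t : ℕ, (1 - γ) * φ a s * (γ ^ (t+1) * (π s a * visit p π (t+1) astar sstar s)) := by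
    intro a s
    have : ∑' t : ℕ, (1 - γ) * φ a s * (γ ^ (t+1) * (π s a * visit p π (t+1) astar sstar s))
        = ((1 - γ) * φ a s) * ∑' t : ℕ, γ ^ (t+1) * (π s a * visit p π (t+1) astar sstar s) :=
      tsum_mul_left
    rw [this]
    simp only [qvisit]
    ring
  rw [Finset.sum_congr rfl fun a _ => Finset.sum_congr rfl fun s _ => key a s]
  simp only [Finset.sum_add_distrib]
  have e1 : ∑ a : A, ∑ s : S, (1 - γ) * ((if a = astar ∧ s = sstar then 1 else 0) * φ a s)
      = (1 - γ) * φ astar sstar := by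
    have h : ∀ (a : A) (s : S), (1 - γ) * ((if a = astar ∧ s = sstar then 1 else 0) * φ a s)
        = if a = astar then (if s = sstar then (1 - γ) * φ a s else 0) else 0 := by
      intro a s
      by_cases h1 : a = astar <;> by_cases h2 : s = sstar <;> simp [h1, h2]
    have h2 : ∀ a : A, (∑ s : S, if a = astar then if s = sstar then (1 - γ) * φ a s else 0 else 0)
        = if a = astar then (1 - γ) * φ a sstar else 0 := by
      intro a
      by_cases h1 : a = astar <;> simp [h1, Finset.sum_ite_eq']
    simp only [h, h2, Finset.sum_ite_eq', Finset.mem_univ, if_true]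
  have e2 : ∑ a : A, ∑ s : S, ∑' t : ℕ,
        (1 - γ) * φ a s * (γ ^ (t+1) * (π s a * visit p π (t+1) astar sstar s))
      = ∑' t : ℕ, ∑ a : A, ∑ s : S,
        (1 - γ) * φ a s * (γ ^ (t+1) * (π s a * visit p π (t+1) astar sstar s)) := by
    rw [Summable.tsum_finsetSum (f := fun (a : A) (t : ℕ) => ∑ s : S,
      (1 - γ) * φ a s * (γ ^ (t+1) * (π s a * visit p π (t+1) astar sstar s)))
      (fun a _ => summable_sum fun s _ => hS a s)]
    exact Finset.sum_congr rfl fun a _ => (Summable.tsum_finsetSum fun s _ => hS a s).symm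
  rw [e1, e2]
  have e3 : ∀ t : ℕ, ∑ a : A, ∑ s : S,
        (1 - γ) * φ a s * (γ ^ (t+1) * (π s a * visit p π (t+1) astar sstar s))
      = (1 - γ) * (γ ^ (t+1) * ∑ s : S, visit p π (t+1) astar sstar s
          * ∑ a : A, π s a * φ a s) := by
    intro t
    rw [Finset.sum_comm]
    simp only [Finset.mul_sum]
    exact Finset.sum_congr rfl fun s _ => Finset.sum_congr rfl fun a _ => by ring
  rw [tsum_congr e3, tsum_mul_left, mul_add]

lemma qsum_r (hp : IsKernel p) (hπ : IsPolicy π) (hγ0 : 0 ≤ γ) (hγ1 : γ < 1)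
    (r : S → A → ℝ) (astar : A) (sstar : S) :
    ∑ a : A, ∑ s : S, qvisit p γ π a s astar sstar * r s a
    = (1 - γ) * Qfun p r γ π astar sstar := by
  rw [qsum hp hπ hγ0 hγ1 (fun a s => r s a) astar sstar]
  rfl

lemma qsum_zero (hp : IsKernel p) (hπ : IsPolicy π) (hγ0 : 0 ≤ γ) (hγ1 : γ < 1)
    (At : A → S → ℝ) (hAt : ∀ s, ∑ a : A, π s a * At a s = 0) (astar : A) (sstar : S) :
    ∑ a : A, ∑ s : S, qvisit p γ π a s astar sstar * At a s
    = (1 - γ) * At astar sstar := by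
  rw [qsum hp hπ hγ0 hγ1 (fun a s => At a s) astar sstar]
  simp [hAt]

lemma qsum_V (hp : IsKernel p) (hπ : IsPolicy π) (hγ0 : 0 ≤ γ) (hγ1 : γ < 1)
    (Vt : S → ℝ) (astar : A) (sstar : S) :
    ∑ a : A, ∑ s : S, qvisit p γ π a s astar sstar
        * (γ * (∑ s' : S, p a s s' * Vt s') - Vt s)
    = -((1 - γ) * Vt sstar) := by
  set w : ℕ → ℝ := fun t => ∑ s : S, visit p π t astar sstar s * Vt s with hw
  have hWsum : Summable (fun t => γ ^ t * w t) := by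
    refine summable_bdd hγ0 hγ1 (C := ∑ s : S, |Vt s|) fun t => ?_
    rw [abs_mul, abs_pow, abs_of_nonneg hγ0, mul_comm]
    refine mul_le_mul_of_nonneg_right ?_ (pow_nonneg hγ0 t)
    calc |w t| ≤ ∑ s : S, |visit p π t astar sstar s * Vt s| := Finset.abs_sum_le_sum_abs _ _
      _ ≤ ∑ s : S, |Vt s| := Finset.sum_le_sum fun s _ => by
          rw [abs_mul]
          exact mul_le_of_le_one_left (abs_nonneg _) (abs_visit_le hp hπ t astar sstar s)
  have hWsum1 : Summable (fun t => γ ^ (t+1) * w (t+1)) :=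
    (summable_nat_add_iff 1).mpr hWsum
  have hWsum2 : Summable (fun t => γ ^ (t+2) * w (t+2)) :=
    (summable_nat_add_iff 2).mpr hWsum
  have hw0 : w 0 = Vt sstar := by
    simp [hw, visit, Finset.sum_ite_eq']
  have hw1 : w 1 = ∑ s' : S, p astar sstar s' * Vt s' := rfl
  have hinner : ∀ s : S, ∑ a : A, π s a * (γ * (∑ s' : S, p a s s' * Vt s') - Vt s)
      = γ * (∑ a : A, π s a * ∑ s' : S, p a s s' * Vt s') - Vt s := by
    intro s
    have : ∀ a : A, π s a * (γ * (∑ s' : S, p a s s' * Vt s') - Vt s)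
        = γ * (π s a * ∑ s' : S, p a s s' * Vt s') - π s a * Vt s := fun a => by ring
    rw [Finset.sum_congr rfl fun a _ => this a, Finset.sum_sub_distrib, ← Finset.mul_sum,
      ← Finset.sum_mul, (hπ s).2, one_mul]
  have hstep : ∀ t : ℕ, ∑ s : S, visit p π (t+1) astar sstar s
        * ∑ a : A, π s a * (γ * (∑ s' : S, p a s s' * Vt s') - Vt s)
      = γ * w (t+2) - w (t+1) := by
    intro t
    rw [Finset.sum_congr rfl fun s _ => by rw [hinner s]]
    have e : ∀ s : S, visit p π (t+1) astar sstar s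
          * (γ * (∑ a : A, π s a * ∑ s' : S, p a s s' * Vt s') - Vt s)
        = γ * (visit p π (t+1) astar sstar s * ∑ a : A, π s a * ∑ s' : S, p a s s' * Vt s')
          - visit p π (t+1) astar sstar s * Vt s := fun s => by ring
    rw [Finset.sum_congr rfl fun s _ => e s, Finset.sum_sub_distrib, ← Finset.mul_sum]
    have hw2 : w (t+2) = ∑ s : S, visit p π (t+1) astar sstar s
        * ∑ a : A, π s a * ∑ s' : S, p a s s' * Vt s' := by
      show ∑ s' : S, (∑ s'' : S, visit p π (t+1) astar sstar s''
          * ∑ a'' : A, π s'' a'' * p a'' s'' s') * Vt s' = _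
      simp only [Finset.sum_mul, Finset.mul_sum]
      rw [Finset.sum_comm]
      refine Finset.sum_congr rfl fun s'' _ => ?_
      rw [Finset.sum_comm]
      exact Finset.sum_congr rfl fun a'' _ => Finset.sum_congr rfl fun s' _ => by ring
    rw [← hw2]
  rw [qsum hp hπ hγ0 hγ1 (fun a s => γ * (∑ s' : S, p a s s' * Vt s') - Vt s) astar sstar]
  rw [tsum_congr fun t => by rw [hstep t]]
  have e2 : ∀ t : ℕ, γ ^ (t+1) * (γ * w (t+2) - w (t+1))
      = γ ^ (t+2) * w (t+2) - γ ^ (t+1) * w (t+1) := fun t => by ring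
  rw [tsum_congr e2, Summable.tsum_sub hWsum2 hWsum1]
  have hA : ∑' t : ℕ, γ ^ t * w t = γ ^ 0 * w 0 + ∑' t : ℕ, γ ^ (t+1) * w (t+1) :=
    Summable.tsum_eq_zero_add hWsum
  have hB : ∑' t : ℕ, γ ^ (t+1) * w (t+1)
      = γ ^ 1 * w 1 + ∑' t : ℕ, γ ^ (t+2) * w (t+2) := Summable.tsum_eq_zero_add hWsum1
  have : ∑' t : ℕ, γ ^ (t+2) * w (t+2)
      = (∑' t : ℕ, γ ^ (t+1) * w (t+1)) - γ ^ 1 * w 1 := by rw [hB]; ring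
  rw [this]
  rw [← hw1, ← hw0]
  ring

end Aux

theorem estimating_function_unbiased_B2 {S A : Type} [Fintype S] [Fintype A] [DecidableEq S] [DecidableEq A]
    [Nonempty S] [Nonempty A]
    (p : A → S → S → ℝ) (r : S → A → ℝ) (γ : ℝ) (ν : S → ℝ) (pinf : A → S → ℝ) (Rmax : ℝ)
    (hp : IsKernel p) (hr : ∀ s a, |r s a| ≤ Rmax)
    (hγ0 : 0 ≤ γ) (hγ1 : γ < 1) (hν : IsPMF ν)
    (hpinf : IsPMF (fun as : A × S => pinf as.1 as.2)) (hpos : ∀ a s, 0 < pinf a s)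
    (π πold : S → A → ℝ) (hπ : IsPolicy π) (hold : IsPolicy πold)
    (Vt : S → ℝ) (At : A → S → ℝ) (hAt : ∀ s, ∑ a : A, πold s a * At a s = 0) :
    Epsi p r γ ν pinf π πold Vt At (ratio p γ pinf πold) (dvisit p γ πold) =
      eta1 p r γ ν π πold := by
  have hγne : (1 : ℝ) - γ ≠ 0 := by linarith
  have hπ1 : ∀ s, ∑ a : A, π s a = 1 := fun s => (hπ s).2
  have hold1 : ∀ s, ∑ a : A, πold s a = 1 := fun s => (hold s).2
  have hp1 : ∀ a s, ∑ s' : S, p a s s' = 1 := fun a s => (hp a s).2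
  -- abbreviations
  set F : S → ℝ := fun s => ∑ a : A, π s a * At a s with hFdef
  set FA : S → ℝ := fun s => ∑ a : A, π s a * Adv p r γ πold a s with hFAdef
  set dtnu : S → ℝ :=
    fun sstar => ∑ a0 : A, ∑ s0 : S, πold s0 a0 * ν s0 * dvisit p γ πold sstar a0 s0 with hdtnudef
  set ωtnu : A → S → ℝ :=
    fun a1 s1 => ∑ a0 : A, ∑ s0 : S, πold s0 a0 * ν s0 * ratio p γ pinf πold a1 s1 a0 s0
    with hwtnudef
  set g : A → S → ℝ := fun a s => ∑ sstar : S, dvisit p γ πold sstar a s * F sstar with hgdef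
  set T : A → S → ℝ :=
    fun a s => r s a + γ * (∑ s' : S, p a s s' * Vt s') - Vt s - At a s with hTdef
  have hq : ∀ (a : A) (s : S) (astar : A) (sstar : S),
      pinf a s * ratio p γ pinf πold a s astar sstar = qvisit p γ πold a s astar sstar := by
    intro a s astar sstar
    rw [ratio, qvisit, mul_div_assoc']
    rw [mul_comm (pinf a s), mul_div_assoc, div_self (hpos a s).ne', mul_one]
  -- the three components of psi
  have hpsi : ∀ (s : S) (a : A) (rr : ℝ) (s' : S),
      psi γ ν π πold Vt At (ratio p γ pinf πold) (dvisit p γ πold) s a rr s'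
      = (∑ sstar : S, dtnu sstar * F sstar)
        + (1 / (1 - γ)) * ∑ sstar : S, dtnu sstar * ∑ astar : A,
            (π sstar astar - πold sstar astar) * ratio p γ pinf πold a s astar sstar *
              (rr + γ * Vt s' - Vt s - At a s)
        + (ωtnu a s / (1 - γ)) * ∑ astar : A,
            (γ * ∑ a' : A, πold s' a' *
                ∑ sstar : S, dvisit p γ πold sstar a' s' * π sstar astar * At astar sstar
             - ∑ sstar : S, dvisit p γ πold sstar a s * π sstar astar * At astar sstar
             + (1 - γ) * π s astar * At astar s) := fun s a rr s' => rfl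
  -- split Epsi into three expectations
  have hsplit : Epsi p r γ ν pinf π πold Vt At (ratio p γ pinf πold) (dvisit p γ πold)
      = (∑ a : A, ∑ s : S, pinf a s * ∑ s' : S, p a s s' * (∑ sstar : S, dtnu sstar * F sstar))
      + (∑ a : A, ∑ s : S, pinf a s * ∑ s' : S, p a s s' *
          ((1 / (1 - γ)) * ∑ sstar : S, dtnu sstar * ∑ astar : A,
            (π sstar astar - πold sstar astar) * ratio p γ pinf πold a s astar sstar *
              (r s a + γ * Vt s' - Vt s - At a s)))
      + (∑ a : A, ∑ s : S, pinf a s * ∑ s' : S, p a s s' *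
          ((ωtnu a s / (1 - γ)) * ∑ astar : A,
            (γ * ∑ a' : A, πold s' a' *
                ∑ sstar : S, dvisit p γ πold sstar a' s' * π sstar astar * At astar sstar
             - ∑ sstar : S, dvisit p γ πold sstar a s * π sstar astar * At astar sstar
             + (1 - γ) * π s astar * At astar s))) := by
    have e : ∀ (a : A) (s : S), pinf a s * ∑ s' : S, p a s s' *
          psi γ ν π πold Vt At (ratio p γ pinf πold) (dvisit p γ πold) s a (r s a) s'
        = pinf a s * ∑ s' : S, p a s s' * (∑ sstar : S, dtnu sstar * F sstar)
        + pinf a s * ∑ s' : S, p a s s' *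
            ((1 / (1 - γ)) * ∑ sstar : S, dtnu sstar * ∑ astar : A,
              (π sstar astar - πold sstar astar) * ratio p γ pinf πold a s astar sstar *
                (r s a + γ * Vt s' - Vt s - At a s))
        + pinf a s * ∑ s' : S, p a s s' *
            ((ωtnu a s / (1 - γ)) * ∑ astar : A,
              (γ * ∑ a' : A, πold s' a' *
                  ∑ sstar : S, dvisit p γ πold sstar a' s' * π sstar astar * At astar sstar
               - ∑ sstar : S, dvisit p γ πold sstar a s * π sstar astar * At astar sstar
               + (1 - γ) * π s astar * At astar s)) := by
      intro a s
      have e1 : ∀ s' : S, p a s s' *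
            psi γ ν π πold Vt At (ratio p γ pinf πold) (dvisit p γ πold) s a (r s a) s'
          = p a s s' * (∑ sstar : S, dtnu sstar * F sstar)
          + p a s s' * ((1 / (1 - γ)) * ∑ sstar : S, dtnu sstar * ∑ astar : A,
              (π sstar astar - πold sstar astar) * ratio p γ pinf πold a s astar sstar *
                (r s a + γ * Vt s' - Vt s - At a s))
          + p a s s' * ((ωtnu a s / (1 - γ)) * ∑ astar : A,
              (γ * ∑ a' : A, πold s' a' *
                  ∑ sstar : S, dvisit p γ πold sstar a' s' * π sstar astar * At astar sstar
               - ∑ sstar : S, dvisit p γ πold sstar a s * π sstar astar * At astar sstar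
               + (1 - γ) * π s astar * At astar s)) := by
        intro s'
        rw [hpsi s a (r s a) s']
        ring
      rw [Finset.sum_congr rfl fun s' _ => e1 s', Finset.sum_add_distrib,
        Finset.sum_add_distrib, mul_add, mul_add]
    calc Epsi p r γ ν pinf π πold Vt At (ratio p γ pinf πold) (dvisit p γ πold)
        = ∑ a : A, ∑ s : S, (pinf a s * ∑ s' : S, p a s s' * (∑ sstar : S, dtnu sstar * F sstar)
        + pinf a s * ∑ s' : S, p a s s' *
            ((1 / (1 - γ)) * ∑ sstar : S, dtnu sstar * ∑ astar : A,
              (π sstar astar - πold sstar astar) * ratio p γ pinf πold a s astar sstar *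
                (r s a + γ * Vt s' - Vt s - At a s))
        + pinf a s * ∑ s' : S, p a s s' *
            ((ωtnu a s / (1 - γ)) * ∑ astar : A,
              (γ * ∑ a' : A, πold s' a' *
                  ∑ sstar : S, dvisit p γ πold sstar a' s' * π sstar astar * At astar sstar
               - ∑ sstar : S, dvisit p γ πold sstar a s * π sstar astar * At astar sstar
               + (1 - γ) * π s astar * At astar s))) :=
          Finset.sum_congr rfl fun a _ => Finset.sum_congr rfl fun s _ => e a s
      _ = _ := by simp only [Finset.sum_add_distrib]
  -- E1
  have hpinfsum : ∑ a : A, ∑ s : S, pinf a s = 1 := by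
    have h := hpinf.2
    rwa [Fintype.sum_prod_type] at h
  have hE1 : (∑ a : A, ∑ s : S, pinf a s * ∑ s' : S, p a s s' *
        (∑ sstar : S, dtnu sstar * F sstar))
      = ∑ sstar : S, dtnu sstar * F sstar := by
    have e : ∀ (a : A) (s : S), pinf a s * ∑ s' : S, p a s s' *
          (∑ sstar : S, dtnu sstar * F sstar)
        = pinf a s * (∑ sstar : S, dtnu sstar * F sstar) := by
      intro a s
      rw [← Finset.sum_mul, hp1 a s, one_mul]
    rw [Finset.sum_congr rfl fun a _ => Finset.sum_congr rfl fun s _ => e a s]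
    simp only [← Finset.sum_mul]
    rw [hpinfsum, one_mul]
  -- Bellman identity for g
  have hBell : ∀ (a : A) (s : S), g a s
      = (1 - γ) * F s + γ * ∑ s' : S, p a s s' * ∑ a' : A, πold s' a' * g a' s' := by
    intro a s
    have e0 : g a s = ∑ sstar : S,
        ((1 - γ) * (if sstar = s then 1 else 0)
          + γ * ∑ s' : S, p a s s' * ∑ a' : A, πold s' a' * dvisit p γ πold sstar a' s')
        * F sstar := by
      rw [hgdef]
      exact Finset.sum_congr rfl fun sstar _ => by
        rw [← dvisit_bellman hp hold hγ0 hγ1 sstar a s]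
    rw [e0]
    rw [Finset.sum_congr rfl fun sstar _ => add_mul _ _ _, Finset.sum_add_distrib]
    congr 1
    · have e1 : ∀ sstar : S, (1 - γ) * (if sstar = s then 1 else 0) * F sstar
          = if sstar = s then (1 - γ) * F sstar else 0 := by
        intro sstar
        by_cases h : sstar = s <;> simp [h]
      rw [Finset.sum_congr rfl fun sstar _ => e1 sstar, Finset.sum_ite_eq',
        if_pos (Finset.mem_univ s)]
    · simp only [hgdef, Finset.sum_mul, Finset.mul_sum]
      rw [Finset.sum_comm]
      refine Finset.sum_congr rfl fun s' _ => ?_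
      rw [Finset.sum_comm]
      exact Finset.sum_congr rfl fun a' _ => Finset.sum_congr rfl fun sstar _ => by ring
  -- E3 term vanishes
  have hE3 : (∑ a : A, ∑ s : S, pinf a s * ∑ s' : S, p a s s' *
        ((ωtnu a s / (1 - γ)) * ∑ astar : A,
          (γ * ∑ a' : A, πold s' a' *
              ∑ sstar : S, dvisit p γ πold sstar a' s' * π sstar astar * At astar sstar
           - ∑ sstar : S, dvisit p γ πold sstar a s * π sstar astar * At astar sstar
           + (1 - γ) * π s astar * At astar s))) = 0 := by
    have hzero : ∀ (a : A) (s : S), (∑ s' : S, p a s s' *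
          ((ωtnu a s / (1 - γ)) * ∑ astar : A,
            (γ * ∑ a' : A, πold s' a' *
                ∑ sstar : S, dvisit p γ πold sstar a' s' * π sstar astar * At astar sstar
             - ∑ sstar : S, dvisit p γ πold sstar a s * π sstar astar * At astar sstar
             + (1 - γ) * π s astar * At astar s))) = 0 := by
      intro a s
      have hB : ∀ s' : S, (∑ astar : A,
            (γ * ∑ a' : A, πold s' a' *
                ∑ sstar : S, dvisit p γ πold sstar a' s' * π sstar astar * At astar sstar
             - ∑ sstar : S, dvisit p γ πold sstar a s * π sstar astar * At astar sstar
             + (1 - γ) * π s astar * At astar s))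
          = γ * (∑ a' : A, πold s' a' * g a' s') - g a s + (1 - γ) * F s := by
        intro s'
        rw [Finset.sum_add_distrib, Finset.sum_sub_distrib]
        congr 1
        congr 1
        · simp only [hgdef, hFdef, Finset.sum_mul, Finset.mul_sum]
          rw [Finset.sum_comm]
          refine Finset.sum_congr rfl fun a' _ => ?_
          rw [Finset.sum_comm]
          exact Finset.sum_congr rfl fun sstar _ => Finset.sum_congr rfl fun astar _ => by ring
        · simp only [hgdef, hFdef, Finset.mul_sum]
          rw [Finset.sum_comm]
          exact Finset.sum_congr rfl fun sstar _ => Finset.sum_congr rfl fun astar _ => by ring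
        · simp only [hFdef, Finset.mul_sum]
          exact Finset.sum_congr rfl fun astar _ => by ring
      have hBint : ∑ s' : S, p a s s' *
            (γ * (∑ a' : A, πold s' a' * g a' s') - g a s + (1 - γ) * F s) = 0 := by
        have e : ∀ s' : S, p a s s' *
              (γ * (∑ a' : A, πold s' a' * g a' s') - g a s + (1 - γ) * F s)
            = γ * (p a s s' * ∑ a' : A, πold s' a' * g a' s')
              - p a s s' * g a s + (1 - γ) * F s * p a s s' := fun s' => by ring
        rw [Finset.sum_congr rfl fun s' _ => e s', Finset.sum_add_distrib,
          Finset.sum_sub_distrib, ← Finset.mul_sum, ← Finset.sum_mul, ← Finset.mul_sum,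
          hp1 a s]
        have := hBell a s
        nlinarith [hBell a s]
      calc (∑ s' : S, p a s s' *
            ((ωtnu a s / (1 - γ)) * ∑ astar : A,
              (γ * ∑ a' : A, πold s' a' *
                  ∑ sstar : S, dvisit p γ πold sstar a' s' * π sstar astar * At astar sstar
               - ∑ sstar : S, dvisit p γ πold sstar a s * π sstar astar * At astar sstar
               + (1 - γ) * π s astar * At astar s)))
          = ∑ s' : S, (ωtnu a s / (1 - γ)) * (p a s s' *
              (γ * (∑ a' : A, πold s' a' * g a' s') - g a s + (1 - γ) * F s)) := by
            refine Finset.sum_congr rfl fun s' _ => ?_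
            rw [hB s']
            ring
        _ = (ωtnu a s / (1 - γ)) * ∑ s' : S, p a s s' *
              (γ * (∑ a' : A, πold s' a' * g a' s') - g a s + (1 - γ) * F s) :=
            (Finset.mul_sum _ _ _).symm
        _ = 0 := by rw [hBint, mul_zero]
    rw [Finset.sum_congr rfl fun a _ => Finset.sum_congr rfl fun s _ => by
      rw [hzero a s, mul_zero]]
    simp
  -- key identity (I)
  have keyI : ∀ (astar : A) (sstar : S),
      ∑ a : A, ∑ s : S, qvisit p γ πold a s astar sstar * T a s
      = (1 - γ) * (Qfun p r γ πold astar sstar - Vt sstar - At astar sstar) := by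
    intro astar sstar
    have e : ∀ (a : A) (s : S), qvisit p γ πold a s astar sstar * T a s
        = qvisit p γ πold a s astar sstar * r s a
          + qvisit p γ πold a s astar sstar * (γ * (∑ s' : S, p a s s' * Vt s') - Vt s)
          - qvisit p γ πold a s astar sstar * At a s := by
      intro a s
      simp only [hTdef]
      ring
    rw [Finset.sum_congr rfl fun a _ => Finset.sum_congr rfl fun s _ => e a s]
    simp only [Finset.sum_add_distrib, Finset.sum_sub_distrib]
    rw [qsum_r hp hold hγ0 hγ1 r astar sstar, qsum_V hp hold hγ0 hγ1 Vt astar sstar,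
      qsum_zero hp hold hγ0 hγ1 At hAt astar sstar]
    ring
  -- algebraic identity at each sstar
  have halg : ∀ sstar : S, (∑ astar : A, (π sstar astar - πold sstar astar) *
        (Qfun p r γ πold astar sstar - Vt sstar - At astar sstar))
      = FA sstar - F sstar := by
    intro sstar
    have e : ∀ astar : A, (π sstar astar - πold sstar astar) *
          (Qfun p r γ πold astar sstar - Vt sstar - At astar sstar)
        = (π sstar astar * Qfun p r γ πold astar sstar
            + πold sstar astar * Vt sstar + πold sstar astar * At astar sstar)
          - (πold sstar astar * Qfun p r γ πold astar sstar
            + π sstar astar * Vt sstar + π sstar astar * At astar sstar) := fun astar => by ring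
    rw [Finset.sum_congr rfl fun astar _ => e astar, Finset.sum_sub_distrib,
      Finset.sum_add_distrib, Finset.sum_add_distrib, Finset.sum_add_distrib,
      Finset.sum_add_distrib, ← Finset.sum_mul, ← Finset.sum_mul, hπ1 sstar, hold1 sstar,
      hAt sstar]
    have hVfun : ∑ astar : A, πold sstar astar * Qfun p r γ πold astar sstar
        = Vfun p r γ πold sstar := rfl
    have hFAe : FA sstar
        = (∑ astar : A, π sstar astar * Qfun p r γ πold astar sstar)
          - Vfun p r γ πold sstar := by
      simp only [hFAdef, Adv]
      rw [Finset.sum_congr rfl fun astar _ => mul_sub (π sstar astar) _ _,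
        Finset.sum_sub_distrib, ← Finset.sum_mul, hπ1 sstar, one_mul]
    rw [hVfun, hFAe]
    simp only [hFdef]
    ring
  -- E2 computation
  have h2a : ∀ (a : A) (s : S), (∑ s' : S, p a s s' *
        ((1 / (1 - γ)) * ∑ sstar : S, dtnu sstar * ∑ astar : A,
          (π sstar astar - πold sstar astar) * ratio p γ pinf πold a s astar sstar *
            (r s a + γ * Vt s' - Vt s - At a s)))
      = (1 / (1 - γ)) * ((∑ sstar : S, dtnu sstar * ∑ astar : A,
          (π sstar astar - πold sstar astar) * ratio p γ pinf πold a s astar sstar)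
          * T a s) := by
    intro a s
    have hfac : ∀ (s' : S), (∑ sstar : S, dtnu sstar * ∑ astar : A,
          (π sstar astar - πold sstar astar) * ratio p γ pinf πold a s astar sstar *
            (r s a + γ * Vt s' - Vt s - At a s))
        = (∑ sstar : S, dtnu sstar * ∑ astar : A,
            (π sstar astar - πold sstar astar) * ratio p γ pinf πold a s astar sstar)
          * (r s a + γ * Vt s' - Vt s - At a s) := by
      intro s'
      rw [Finset.sum_mul]
      refine Finset.sum_congr rfl fun sstar _ => ?_
      simp only [Finset.sum_mul, Finset.mul_sum]
      exact Finset.sum_congr rfl fun astar _ => by ring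
    have hTsum : ∑ s' : S, p a s s' * (r s a + γ * Vt s' - Vt s - At a s) = T a s := by
      have e : ∀ s' : S, p a s s' * (r s a + γ * Vt s' - Vt s - At a s)
          = γ * (p a s s' * Vt s') + p a s s' * (r s a - Vt s - At a s) := fun s' => by ring
      rw [Finset.sum_congr rfl fun s' _ => e s', Finset.sum_add_distrib, ← Finset.mul_sum,
        ← Finset.sum_mul, hp1 a s, one_mul]
      simp only [hTdef]
      ring
    calc (∑ s' : S, p a s s' *
          ((1 / (1 - γ)) * ∑ sstar : S, dtnu sstar * ∑ astar : A,
            (π sstar astar - πold sstar astar) * ratio p γ pinf πold a s astar sstar *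
              (r s a + γ * Vt s' - Vt s - At a s)))
        = ∑ s' : S, (1 / (1 - γ)) * ((∑ sstar : S, dtnu sstar * ∑ astar : A,
            (π sstar astar - πold sstar astar) * ratio p γ pinf πold a s astar sstar)
            * (p a s s' * (r s a + γ * Vt s' - Vt s - At a s))) := by
          refine Finset.sum_congr rfl fun s' _ => ?_
          rw [hfac s']
          ring
      _ = (1 / (1 - γ)) * ∑ s' : S, ((∑ sstar : S, dtnu sstar * ∑ astar : A,
            (π sstar astar - πold sstar astar) * ratio p γ pinf πold a s astar sstar)
            * (p a s s' * (r s a + γ * Vt s' - Vt s - At a s))) :=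
          (Finset.mul_sum _ _ _).symm
      _ = (1 / (1 - γ)) * ((∑ sstar : S, dtnu sstar * ∑ astar : A,
            (π sstar astar - πold sstar astar) * ratio p γ pinf πold a s astar sstar)
            * ∑ s' : S, p a s s' * (r s a + γ * Vt s' - Vt s - At a s)) := by
          congr 1
          exact (Finset.mul_sum _ _ _).symm
      _ = _ := by rw [hTsum]
  set G : A → S → S → A → ℝ := fun a s sstar astar =>
    ((1 / (1 - γ)) * (dtnu sstar * (π sstar astar - πold sstar astar)))
      * (qvisit p γ πold a s astar sstar * T a s) with hGdef
  have hE2 : (∑ a : A, ∑ s : S, pinf a s * ∑ s' : S, p a s s' *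
        ((1 / (1 - γ)) * ∑ sstar : S, dtnu sstar * ∑ astar : A,
          (π sstar astar - πold sstar astar) * ratio p γ pinf πold a s astar sstar *
            (r s a + γ * Vt s' - Vt s - At a s)))
      = ∑ sstar : S, dtnu sstar * (FA sstar - F sstar) := by
    have e : ∀ (a : A) (s : S), pinf a s * ∑ s' : S, p a s s' *
          ((1 / (1 - γ)) * ∑ sstar : S, dtnu sstar * ∑ astar : A,
            (π sstar astar - πold sstar astar) * ratio p γ pinf πold a s astar sstar *
              (r s a + γ * Vt s' - Vt s - At a s))
        = ∑ sstar : S, ∑ astar : A, G a s sstar astar := by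
      intro a s
      rw [h2a a s]
      simp only [hGdef, Finset.sum_mul, Finset.mul_sum]
      refine Finset.sum_congr rfl fun sstar _ => Finset.sum_congr rfl fun astar _ => ?_
      rw [← hq a s astar sstar]
      ring
    rw [Finset.sum_congr rfl fun a _ => Finset.sum_congr rfl fun s _ => e a s]
    have swap1 : (∑ a : A, ∑ s : S, ∑ sstar : S, ∑ astar : A, G a s sstar astar)
        = ∑ sstar : S, ∑ astar : A, ∑ a : A, ∑ s : S, G a s sstar astar := by
      calc (∑ a : A, ∑ s : S, ∑ sstar : S, ∑ astar : A, G a s sstar astar)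
          = ∑ a : A, ∑ sstar : S, ∑ s : S, ∑ astar : A, G a s sstar astar :=
            Finset.sum_congr rfl fun a _ => Finset.sum_comm
        _ = ∑ sstar : S, ∑ a : A, ∑ s : S, ∑ astar : A, G a s sstar astar :=
            Finset.sum_comm
        _ = ∑ sstar : S, ∑ a : A, ∑ astar : A, ∑ s : S, G a s sstar astar :=
            Finset.sum_congr rfl fun sstar _ => Finset.sum_congr rfl fun a _ =>
              Finset.sum_comm
        _ = ∑ sstar : S, ∑ astar : A, ∑ a : A, ∑ s : S, G a s sstar astar :=
            Finset.sum_congr rfl fun sstar _ => Finset.sum_comm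
    rw [swap1]
    refine Finset.sum_congr rfl fun sstar _ => ?_
    have e2 : ∀ astar : A, (∑ a : A, ∑ s : S, G a s sstar astar)
        = dtnu sstar * ((π sstar astar - πold sstar astar) *
            (Qfun p r γ πold astar sstar - Vt sstar - At astar sstar)) := by
      intro astar
      have : (∑ a : A, ∑ s : S, G a s sstar astar)
          = ((1 / (1 - γ)) * (dtnu sstar * (π sstar astar - πold sstar astar)))
            * (∑ a : A, ∑ s : S, qvisit p γ πold a s astar sstar * T a s) := by
        rw [Finset.mul_sum]
        refine Finset.sum_congr rfl fun a _ => ?_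
        rw [Finset.mul_sum]
      rw [this, keyI astar sstar]
      field_simp
    rw [Finset.sum_congr rfl fun astar _ => e2 astar, ← Finset.mul_sum]
    congr 1
    have : (∑ astar : A, (π sstar astar - πold sstar astar) *
          (Qfun p r γ πold astar sstar - Vt sstar - At astar sstar)) = FA sstar - F sstar :=
      halg sstar
    rw [← this]
  -- final assembly
  rw [hsplit, hE1, hE2, hE3, add_zero, ← Finset.sum_add_distrib]
  have heta : eta1 p r γ ν π πold = ∑ sstar : S, dtnu sstar * FA sstar := by
    have hdnu : ∀ s' : S, dnu p γ ν πold s' = dtnu s' := by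
      intro s'
      rw [hdtnudef]
      exact Finset.sum_comm
    calc eta1 p r γ ν π πold
        = ∑ s : S, ∑ a : A, π s a * Adv p r γ πold a s * dnu p γ ν πold s :=
          Finset.sum_comm
      _ = ∑ s : S, dtnu s * FA s := by
          refine Finset.sum_congr rfl fun s _ => ?_
          rw [← hdnu s]
          simp only [hFAdef, Finset.mul_sum, Finset.sum_mul]
          exact Finset.sum_congr rfl fun a _ => by ring
  rw [heta]
  refine Finset.sum_congr rfl fun sstar _ => ?_
  ring

end VEPO
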